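/- Let s > 3/2 and r ≤ 1. Then there exists a constant C = C(s, r) > 0 such that for every integer k ≥ 0, ∑_{0 ≤ n ≤ k/2} (1+n²)^{1-s} (1+(n-k)²)^{r-1} ≤ C (1+k²)^{r-1}, where the sum is over integers n with 0 ≤ n ≤ k/2. -/

import Mathlib

/-!
For `0 ≤ n ≤ k/2` we have `k - n ≥ k/2`, so `1 + k² ≤ 4 (1 + (n - k)²)`; as `r - 1 ≤ 0`, the second
factor is at most `4^(1-r) (1+k²)^(r-1)`. What remains is bounded by the full series
`∑_{n ∈ ℤ} (1+n²)^(1-s)`, which converges because `2 (s - 1) > 1`.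
-/

open Filter in
theorem summable_one_add_sq_rpow {a : ℝ} (ha : a < -1/2) :
    Summable (fun n : ℤ => (1 + (n : ℝ) ^ 2) ^ a) := by
  have hp := (Real.summable_one_div_int_add_rpow 0 (-2 * a)).2 (by linarith)
  refine hp.of_norm_bounded_eventually ?_
  filter_upwards [(Set.finite_singleton (0 : ℤ)).compl_mem_cofinite] with n hn
  have hsq : (0 : ℝ) < (n : ℝ) ^ 2 := by
    have : (n : ℝ) ≠ 0 := by exact_mod_cast hn
    positivity
  calc ‖(1 + (n : ℝ) ^ 2) ^ a‖ = (1 + (n : ℝ) ^ 2) ^ a := Real.norm_of_nonneg (by positivity)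
    _ ≤ ((n : ℝ) ^ 2) ^ a := Real.rpow_le_rpow_of_nonpos hsq (by linarith) (by linarith)
    _ = 1 / |(n : ℝ) + 0| ^ (-2 * a) := by
      rw [add_zero, one_div, ← Real.rpow_neg (abs_nonneg _), neg_mul, neg_neg, Real.rpow_mul
        (abs_nonneg _), Real.rpow_two, sq_abs]

theorem one_add_sq_le_four_mul_one_add_sub_sq {m k : ℝ} (hk : 0 ≤ k) (hmk : 2 * m ≤ k) :
    1 + k ^ 2 ≤ 4 * (1 + (m - k) ^ 2) := by
  nlinarith

theorem one_add_sub_sq_rpow_le {m k r : ℝ} (hk : 0 ≤ k) (hmk : 2 * m ≤ k) (hr : r ≤ 1) :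
    (1 + (m - k) ^ 2) ^ (r - 1) ≤ 4 ^ (1 - r) * (1 + k ^ 2) ^ (r - 1) :=
  calc (1 + (m - k) ^ 2) ^ (r - 1) ≤ ((1 + k ^ 2) / 4) ^ (r - 1) :=
        Real.rpow_le_rpow_of_nonpos (by positivity)
          (by linarith [one_add_sq_le_four_mul_one_add_sub_sq hk hmk]) (by linarith)
    _ = 4 ^ (1 - r) * (1 + k ^ 2) ^ (r - 1) := by
        rw [Real.div_rpow (by positivity) (by norm_num), div_eq_mul_inv, ← Real.rpow_neg
          (by norm_num), neg_sub, mul_comm]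

theorem ENNReal.tsum_subtype_ofReal_mul_le {α : Type*} {f g : α → ℝ} {p : α → Prop} {D : ℝ}
    (hf : ∀ x, 0 ≤ f x) (hfs : Summable f) (hg : ∀ x, p x → g x ≤ D) :
    ∑' x : {x // p x}, ENNReal.ofReal (f x * g x) ≤ ENNReal.ofReal ((∑' x, f x) * D) :=
  calc ∑' x : {x // p x}, ENNReal.ofReal (f x * g x)
      ≤ ∑' x : {x // p x}, ENNReal.ofReal (f x) * ENNReal.ofReal D := by
        refine ENNReal.tsum_le_tsum fun x => ?_
        rw [← ENNReal.ofReal_mul (hf x)]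
        exact ENNReal.ofReal_le_ofReal (mul_le_mul_of_nonneg_left (hg x x.2) (hf x))
    _ ≤ (∑' x, ENNReal.ofReal (f x)) * ENNReal.ofReal D := by
        rw [ENNReal.tsum_mul_right]
        gcongr
        exact ENNReal.tsum_comp_le_tsum_of_injective Subtype.val_injective _
    _ = ENNReal.ofReal ((∑' x, f x) * D) := by
        rw [← ENNReal.ofReal_tsum_of_nonneg hf hfs, ENNReal.ofReal_mul (tsum_nonneg hf)]

/-- For `s > 3/2` and `r ≤ 1`, there is `C = C(s,r) > 0` such that for every
integer `k ≥ 0`, `∑_{0 ≤ n ≤ k/2} (1+n²)^{1-s} (1+(n-k)²)^{r-1} ≤ C (1+k²)^{r-1}`, the sum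
running over the integers `n` with `0 ≤ n ≤ k/2` (i.e. `0 ≤ n` and `2n ≤ k`). -/
theorem sum_lower_block_estimate (s r : ℝ) (hs : 3/2 < s) (hr : r ≤ 1) :
    ∃ C : ℝ, 0 < C ∧ ∀ k : ℤ, 0 ≤ k →
      ∑' n : {m : ℤ // 0 ≤ m ∧ 2 * m ≤ k}, ENNReal.ofReal
          ((1 + ((n : ℤ) : ℝ) ^ 2) ^ (1 - s) *
            (1 + (((n : ℤ) : ℝ) - (k : ℝ)) ^ 2) ^ (r - 1)) ≤
        ENNReal.ofReal (C * (1 + (k : ℝ) ^ 2) ^ (r - 1)) := by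
  have hsum := summable_one_add_sq_rpow (a := 1 - s) (by linarith)
  have hS : 0 < ∑' n : ℤ, (1 + (n : ℝ) ^ 2) ^ (1 - s) :=
    hsum.tsum_pos (fun n => by positivity) 0 (by positivity)
  refine ⟨4 ^ (1 - r) * ∑' n : ℤ, (1 + (n : ℝ) ^ 2) ^ (1 - s), by positivity, fun k hk => ?_⟩
  rw [mul_comm (4 ^ (1 - r) : ℝ), mul_assoc]
  exact ENNReal.tsum_subtype_ofReal_mul_le (g := fun m : ℤ => (1 + ((m : ℝ) - k) ^ 2) ^ (r - 1))
    (fun n => by positivity) hsum fun m hm =>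
      one_add_sub_sq_rpow_le (by exact_mod_cast hk) (by exact_mod_cast hm.2) hr
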